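/- If σ_{φ,𝔴} : F^Γ → F^Γ is finite fibre, then ent_set(σ_{φ,𝔴}) = ent_set(σ_φ), i.e. 𝗈(σ_{φ,𝔴}) = 𝗈(σ_φ). -/

import Mathlib

open Function Set

/-- The weighted generalized shift `σ_{φ,𝔴} : F^Γ → F^Γ`,
`σ_{φ,𝔴}((x_α)_α) = (𝔴_α x_{φ(α)})_α`. The unweighted shift `σ_φ` is `wshift φ 1`. -/
def wshift {F : Type*} [Field F] {Γ : Type*} (φ : Γ → Γ) (w : Γ → F) :
    (Γ → F) → (Γ → F) :=
  fun x α => w α * x (φ α)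
/-- `f` is finite fibre if every fibre `f⁻¹(y)` is finite. -/
def FiniteFibre {A : Type*} (f : A → A) : Prop := ∀ y : A, (f ⁻¹' {y}).Finite
/-- An `f`-orbit: a sequence with `f (a n) = a (n+1)` for all `n`. -/
def IsOrbit {A : Type*} (f : A → A) (a : ℕ → A) : Prop := ∀ n : ℕ, f (a n) = a (n + 1)

/-- There exist `m` injective `f`-orbits with pairwise disjoint ranges. -/
def HasDisjointOrbits {A : Type*} (f : A → A) (m : ℕ) : Prop :=
  ∃ a : Fin m → ℕ → A, (∀ i, IsOrbit f (a i) ∧ Function.Injective (a i)) ∧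
    ∀ i j, i ≠ j → Disjoint (Set.range (a i)) (Set.range (a j))

/-- The infinite orbit number `𝗈(f) ∈ ℕ ∪ {+∞}`. -/
noncomputable def orbitNumber {A : Type*} (f : A → A) : ℕ∞ :=
  sSup ({0} ∪ {m : ℕ∞ | ∃ k : ℕ, m = (k : ℕ∞) ∧ 1 ≤ k ∧ HasDisjointOrbits f k})

/-- Covariant set-theoretical entropy: `ent_set f = 𝗈(f)`. -/
noncomputable def entSet {A : Type*} (f : A → A) : ℕ∞ := orbitNumber f

/-!
The weighted shift `σ = σ_{φ,𝔴}` is a continuous linear endomorphism of the compact space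
`F^Γ` (with `F` discrete), so its infinite orbit number is `0` or `∞`. If some nonzero
polynomial annihilates `σ`, then, `F` being finite, `σ` is quasi-periodic (`σ^m = σ^n` for some
`m < n`) and no orbit is injective. Otherwise Baire's theorem, applied to the closed subspaces
`ker g(σ)`, yields a point `x` killed by no nonzero `g(σ)`, and the orbits of the points
`(σ^(i+1) + 1) x` are injective and pairwise disjoint.

It remains to see that `σ` is quasi-periodic exactly when `φ` is. If `φ^m = φ^(m+p)`, the
weight product along a `φ`-orbit picks up the same factor `b` in every period after time `m`,
and `b^q = b` for `q = |F|`. Conversely, if `σ^m = σ^(m+p)`, every `β` with `σ^m(e_β) ≠ 0` is a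
`φ`-periodic point of period `p`, and finite fibres leave only finitely many other `β`.
-/

open Polynomial

def QuasiPeriodic {α : Type*} (f : α → α) : Prop := ∃ m n, m < n ∧ f^[m] = f^[n]

section SelfMap

variable {α : Type*} {f : α → α}

theorem quasiPeriodic_iff_exists_isPeriodicPt :
    QuasiPeriodic f ↔ ∃ m p, 0 < p ∧ ∀ x, IsPeriodicPt f p (f^[m] x) := by
  constructor
  · rintro ⟨m, n, hmn, h⟩
    refine ⟨m, n - m, by omega, fun x => ?_⟩
    rw [IsPeriodicPt, IsFixedPt, ← iterate_add_apply, Nat.sub_add_cancel hmn.le, h]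
  · rintro ⟨m, p, hp, h⟩
    exact ⟨m, p + m, by omega, funext fun x => by rw [iterate_add_apply, (h x).eq]⟩

theorem IsOrbit.eq_iterate {a : ℕ → α} (ha : IsOrbit f a) (n : ℕ) : a n = f^[n] (a 0) := by
  induction n with
  | zero => rfl
  | succ n ih => rw [← ha n, ih, iterate_succ_apply']

theorem QuasiPeriodic.not_injective_of_isOrbit (hf : QuasiPeriodic f) {a : ℕ → α}
    (ha : IsOrbit f a) : ¬ Injective a := by
  obtain ⟨m, n, hmn, h⟩ := hf
  intro hinj
  exact hmn.ne (hinj (by rw [ha.eq_iterate m, ha.eq_iterate n, h]))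

theorem orbitNumber_eq_zero_of_quasiPeriodic (hf : QuasiPeriodic f) : orbitNumber f = 0 := by
  refine le_antisymm (sSup_le ?_) bot_le
  rintro _ (rfl | ⟨k, -, hk, a, ha, -⟩)
  · exact le_rfl
  · exact ((hf.not_injective_of_isOrbit (ha ⟨0, hk⟩).1) (ha ⟨0, hk⟩).2).elim

theorem orbitNumber_eq_top_of_forall_hasDisjointOrbits (h : ∀ k, HasDisjointOrbits f k) :
    orbitNumber f = ⊤ := by
  refine sSup_eq_top.mpr fun b hb => ?_
  lift b to ℕ using hb.ne
  exact ⟨(b + 1 : ℕ), Or.inr ⟨b + 1, rfl, by omega, h (b + 1)⟩,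
    by exact_mod_cast b.lt_succ_self⟩

theorem FiniteFibre.iterate (hf : FiniteFibre f) (n : ℕ) : FiniteFibre f^[n] := by
  induction n with
  | zero => exact fun y => by simp
  | succ n ih =>
    intro y
    rw [iterate_succ, preimage_comp]
    exact (ih y).preimage' fun b _ => hf b

theorem exists_isPeriodicPt_iterate_ncard {Z : Set α} (hZ : Z.Finite) {x : α}
    (h : ∀ t ≤ Z.ncard, f^[t] x ∈ Z) :
    ∃ d, 0 < d ∧ d ≤ Z.ncard ∧ IsPeriodicPt f d (f^[Z.ncard] x) := by
  have hcard : hZ.toFinset.card < (Finset.range (Z.ncard + 1)).card := by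
    rw [Finset.card_range, ← ncard_eq_toFinset_card Z hZ]; omega
  obtain ⟨s, hs, t, ht, hst, heq⟩ := Finset.exists_ne_map_eq_of_card_lt_of_maps_to hcard
    (f := fun t => f^[t] x) fun t ht => by
      simpa using h t (Nat.lt_succ_iff.mp (Finset.mem_range.mp ht))
  rw [Finset.mem_range] at hs ht
  wlog hlt : s < t generalizing s t
  · exact this t ht s hs hst.symm heq.symm (by omega)
  refine ⟨t - s, by omega, by omega, ?_⟩
  have hper : IsPeriodicPt f (t - s) (f^[s] x) := by
    rw [IsPeriodicPt, IsFixedPt, ← iterate_add_apply, Nat.sub_add_cancel hlt.le]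
    exact heq.symm
  simpa [← iterate_add_apply, Nat.sub_add_cancel (by omega : s ≤ Z.ncard)] using
    hper.apply_iterate (Z.ncard - s)

theorem quasiPeriodic_of_isPeriodicPt_off_finite {Z : Set α} (hZ : Z.Finite) {p : ℕ}
    (hp : 0 < p) (h : ∀ x ∉ Z, IsPeriodicPt f p x) : QuasiPeriodic f := by
  refine quasiPeriodic_iff_exists_isPeriodicPt.mpr
    ⟨Z.ncard, p * Z.ncard.factorial, by positivity, fun x => ?_⟩
  by_cases hx : ∀ t ≤ Z.ncard, f^[t] x ∈ Z
  · obtain ⟨d, hd, hdZ, hper⟩ := exists_isPeriodicPt_iterate_ncard hZ hx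
    exact hper.trans_dvd ((Nat.dvd_factorial hd hdZ).mul_left p)
  · push Not at hx
    obtain ⟨t, ht, hxt⟩ := hx
    have hper := (h _ hxt).apply_iterate (Z.ncard - t)
    rw [← iterate_add_apply, Nat.sub_add_cancel ht] at hper
    exact hper.trans_dvd (dvd_mul_right p _)

end SelfMap

theorem Finset.prod_range_add_mul_of_periodic {M : Type*} [CommMonoid M] {u : ℕ → M} {n p : ℕ}
    (hu : Periodic (fun i => u (n + i)) p) (j : ℕ) :
    ∏ i ∈ Finset.range (n + p * j), u i =
      (∏ i ∈ Finset.range n, u i) * (∏ i ∈ Finset.range p, u (n + i)) ^ j := by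
  induction j with
  | zero => simp
  | succ j ih =>
    rw [mul_add_one, ← add_assoc, Finset.prod_range_add, ih, pow_succ, mul_assoc]
    congr 2
    refine Finset.prod_congr rfl fun i _ => ?_
    convert hu.nat_mul j i using 2
    simp only [Nat.cast_id]
    ring

section WeightedShift

variable {F : Type*} [Field F] {Γ : Type*} {φ : Γ → Γ} {w : Γ → F}

theorem wshift_iterate_apply (n : ℕ) (x : Γ → F) (α : Γ) :
    (wshift φ w)^[n] x α = (∏ i ∈ Finset.range n, w (φ^[i] α)) * x (φ^[n] α) := by
  induction n generalizing x with
  | zero => simp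
  | succ n ih =>
    rw [iterate_succ_apply, ih]
    simp only [wshift, iterate_succ_apply', Finset.prod_range_succ]
    ring

theorem wshift_iterate_single_apply_ne_zero_iff [DecidableEq Γ] {n : ℕ} {β α : Γ} :
    (wshift φ w)^[n] (Pi.single β 1) α ≠ 0 ↔
      (∏ i ∈ Finset.range n, w (φ^[i] α)) ≠ 0 ∧ φ^[n] α = β := by
  rw [wshift_iterate_apply, Pi.single_apply]
  split_ifs with h <;> simp [h]

theorem QuasiPeriodic.quasiPeriodic_wshift [Fintype F] (hφ : QuasiPeriodic φ) (w : Γ → F) :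
    QuasiPeriodic (wshift φ w) := by
  obtain ⟨m, p, hp, hper⟩ := quasiPeriodic_iff_exists_isPeriodicPt.mp hφ
  have hq : 1 < Fintype.card F := Fintype.one_lt_card
  refine ⟨m + p * 1, m + p * Fintype.card F, by nlinarith, funext fun x => funext fun α => ?_⟩
  have hφα : ∀ j, φ^[m + p * j] α = φ^[m] α := fun j => by
    rw [add_comm, iterate_add_apply]; exact (hper α).mul_const j
  have hw : Periodic (fun i => w (φ^[m + i] α)) p := fun i => by
    show w (φ^[m + (i + p)] α) = w (φ^[m + i] α)
    rw [show m + (i + p) = p + (i + m) by omega, iterate_add_apply, iterate_add_apply,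
      ((hper α).apply_iterate i).eq, ← iterate_add_apply, add_comm i]
  rw [wshift_iterate_apply, wshift_iterate_apply, hφα, hφα,
    Finset.prod_range_add_mul_of_periodic hw, Finset.prod_range_add_mul_of_periodic hw,
    FiniteField.pow_card, pow_one]

theorem isPeriodicPt_of_wshift_iterate_single_ne_zero [DecidableEq Γ] {m p : ℕ}
    (h : ∀ x, IsPeriodicPt (wshift φ w) p ((wshift φ w)^[m] x)) {β : Γ}
    (hβ : (wshift φ w)^[m] (Pi.single β 1) ≠ 0) : IsPeriodicPt φ p β := by
  obtain ⟨α, hα⟩ := Function.ne_iff.mp hβ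
  have hpα : (wshift φ w)^[p + m] (Pi.single β 1) α ≠ 0 := by
    rwa [iterate_add_apply, (h _).eq]
  obtain ⟨-, rfl⟩ := wshift_iterate_single_apply_ne_zero_iff.mp hα
  rw [IsPeriodicPt, IsFixedPt, ← iterate_add_apply]
  exact (wshift_iterate_single_apply_ne_zero_iff.mp hpα).2

theorem QuasiPeriodic.of_wshift (hff : FiniteFibre (wshift φ w))
    (h : QuasiPeriodic (wshift φ w)) : QuasiPeriodic φ := by
  classical
  obtain ⟨m, p, hp, hper⟩ := quasiPeriodic_iff_exists_isPeriodicPt.mp h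
  have hZ : {β : Γ | (wshift φ w)^[m] (Pi.single β 1) = 0}.Finite :=
    (hff.iterate m 0).preimage fun β _ γ _ hβγ => by
      simpa [Pi.single_apply, eq_comm] using congrFun hβγ γ
  exact quasiPeriodic_of_isPeriodicPt_off_finite hZ hp fun β hβ =>
    isPeriodicPt_of_wshift_iterate_single_ne_zero hper hβ

theorem QuasiPeriodic.of_wshift_one (h : QuasiPeriodic (wshift φ (1 : Γ → F))) :
    QuasiPeriodic φ := by
  classical
  obtain ⟨m, p, hp, hper⟩ := quasiPeriodic_iff_exists_isPeriodicPt.mp h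
  refine quasiPeriodic_iff_exists_isPeriodicPt.mpr ⟨m, p, hp, fun α => ?_⟩
  refine isPeriodicPt_of_wshift_iterate_single_ne_zero hper (Function.ne_iff.mpr ⟨α, ?_⟩)
  exact wshift_iterate_single_apply_ne_zero_iff.mpr ⟨by simp, rfl⟩

end WeightedShift

theorem Polynomial.X_pow_add_one_mul_X_pow_inj {R : Type*} [Semiring R] [Nontrivial R]
    {i j n m : ℕ} (h : (X ^ (i + 1) + 1 : R[X]) * X ^ n = (X ^ (j + 1) + 1) * X ^ m) :
    i = j ∧ n = m := by
  have hdeg : ∀ k, (X ^ (k + 1) + 1 : R[X]).natDegree = k + 1 := fun k => by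
    simpa using natDegree_X_pow_add_C (R := R) (n := k + 1) (r := 1)
  have hne : ∀ k, (X ^ (k + 1) + 1 : R[X]) ≠ 0 := fun k hk => by
    simpa [hk] using hdeg k
  have htr : ∀ k, (X ^ (k + 1) + 1 : R[X]).natTrailingDegree = 0 := fun k =>
    natTrailingDegree_eq_zero.mpr (Or.inr (by simp))
  have h₁ := congrArg natTrailingDegree h
  have h₂ := congrArg natDegree h
  rw [natTrailingDegree_mul_X_pow (hne i), natTrailingDegree_mul_X_pow (hne j), htr, htr] at h₁
  rw [natDegree_mul_X_pow _ (hne i), natDegree_mul_X_pow _ (hne j), hdeg, hdeg] at h₂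
  omega

section LinearEndomorphism

variable {F : Type*} [Field F] {V : Type*} [AddCommGroup V] [Module F V]

theorem hasDisjointOrbits_of_forall_aeval_eq_zero {T : Module.End F V} {x : V}
    (hx : ∀ g : F[X], aeval T g x = 0 → g = 0) (k : ℕ) : HasDisjointOrbits T k := by
  have hinj : ∀ {g h : F[X]}, aeval T g x = aeval T h x → g = h := fun e =>
    sub_eq_zero.mp (hx _ (by rw [map_sub, LinearMap.sub_apply, e, sub_self]))
  refine ⟨fun i n => aeval T ((X ^ ((i : ℕ) + 1) + 1 : F[X]) * X ^ n) x,
    fun i => ⟨fun n => ?_, ?_⟩, ?_⟩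
  · simp only
    rw [pow_succ' _ n, mul_left_comm, map_mul (aeval T) X, aeval_X, Module.End.mul_apply]
  · exact fun n m e => (X_pow_add_one_mul_X_pow_inj (hinj e)).2
  · rintro i j hij
    refine Set.disjoint_left.mpr ?_
    rintro _ ⟨n, rfl⟩ ⟨m, e⟩
    exact hij (Fin.ext (X_pow_add_one_mul_X_pow_inj (hinj e)).1.symm)

theorem IsAlgebraic.exists_lt_pow_eq_pow {A : Type*} [Ring A] [Algebra F A] [Finite F] {a : A}
    (ha : IsAlgebraic F a) : ∃ m n, m < n ∧ a ^ m = a ^ n := by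
  have := Algebra.finite_adjoin_simple_of_isIntegral ha.isIntegral
  have := Module.finite_of_finite F (M := Algebra.adjoin F {a})
  obtain ⟨m, n, hmn, h⟩ := Finite.exists_lt_map_eq_of_forall_mem
    (f := fun n : ℕ => (⟨a ^ n, pow_mem (Algebra.self_mem_adjoin_singleton F a) n⟩ :
      Algebra.adjoin F {a})) (fun _ => mem_univ _) finite_univ
  exact ⟨m, n, hmn, congrArg Subtype.val h⟩

theorem IsAlgebraic.quasiPeriodic [Finite F] {T : Module.End F V} (hT : IsAlgebraic F T) :
    QuasiPeriodic T := by
  obtain ⟨m, n, hmn, h⟩ := hT.exists_lt_pow_eq_pow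
  exact ⟨m, n, hmn, by rw [← Module.End.coe_pow, h, Module.End.coe_pow]⟩

theorem Module.End.continuous_aeval [TopologicalSpace V] [ContinuousAdd V]
    [ContinuousConstSMul F V] {T : Module.End F V} (hT : Continuous T) (g : F[X]) :
    Continuous (aeval T g) := by
  rw [aeval_eq_sum_range, LinearMap.coe_sum, Finset.sum_fn]
  refine continuous_finsetSum _ fun i _ => ?_
  rw [LinearMap.coe_smul, Module.End.coe_pow]
  exact (hT.iterate i).const_smul _

variable [TopologicalSpace V] [CompactSpace V] [IsTopologicalAddGroup V]

theorem Module.End.exists_lt_pow_sub_pow_mem_of_isOpen (T : Module.End F V) {K : Submodule F V}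
    (hK : IsOpen (K : Set V)) (hTK : K ≤ K.comap T) :
    ∃ a b, a < b ∧ ∀ x, (T ^ b) x - (T ^ a) x ∈ K := by
  have : Finite (V ⧸ K) := AddSubgroup.quotient_finite_of_isOpen K.toAddSubgroup hK
  obtain ⟨a, b, hab, h⟩ := Finite.exists_lt_map_eq_of_forall_mem
    (f := fun n : ℕ => ⇑(K.mapQ K T hTK ^ n)) (fun _ => mem_univ _) finite_univ
  refine ⟨a, b, hab, fun x => (Submodule.Quotient.eq K).mp ?_⟩
  have hx := congrFun h (Submodule.Quotient.mk x)
  rw [← Submodule.mapQ_pow, ← Submodule.mapQ_pow, Submodule.mapQ_apply,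
    Submodule.mapQ_apply] at hx
  exact hx.symm

theorem isAlgebraic_or_exists_forall_aeval_eq_zero [Countable F] [T2Space V]
    [ContinuousConstSMul F V] {T : Module.End F V} (hT : Continuous T) :
    IsAlgebraic F T ∨ ∃ x : V, ∀ g : F[X], aeval T g x = 0 → g = 0 := by
  refine or_iff_not_imp_right.mpr fun htors => ?_
  push Not at htors
  have : Countable F[X] := (AddMonoidAlgebra.coeff_injective.comp toFinsupp_injective).countable
  obtain ⟨⟨g, hg⟩, y, hy⟩ := nonempty_interior_of_iUnion_of_closed
    (f := fun g : {g : F[X] // g ≠ 0} => (LinearMap.ker (aeval T g.1) : Set V))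
    (fun g => isClosed_singleton.preimage (Module.End.continuous_aeval hT g.1))
    (eq_univ_of_forall fun x => by
      obtain ⟨g, hgx, hg⟩ := htors x
      exact mem_iUnion.mpr ⟨⟨g, hg⟩, hgx⟩)
  set K := LinearMap.ker (aeval T g)
  have hKopen : IsOpen (K : Set V) :=
    K.toAddSubgroup.isOpen_of_mem_nhds (mem_interior_iff_mem_nhds.mp hy)
  have hcomm : Commute T (aeval T g) := by simpa using (commute_X g).map (aeval T)
  have hTK : K ≤ K.comap T := fun x hx => by
    simp only [Submodule.mem_comap, LinearMap.mem_ker, K] at hx ⊢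
    rw [← Module.End.mul_apply, ← hcomm.eq, Module.End.mul_apply, hx, map_zero]
  obtain ⟨a, b, hab, hmem⟩ := T.exists_lt_pow_sub_pow_mem_of_isOpen hKopen hTK
  refine ⟨g * (X ^ b - X ^ a), mul_ne_zero hg fun h => hab.ne' ?_, LinearMap.ext fun x => ?_⟩
  · simpa using congrArg natDegree (sub_eq_zero.mp h)
  · simpa [K] using hmem x

theorem orbitNumber_eq_top_of_not_quasiPeriodic [Finite F] [T2Space V] [ContinuousConstSMul F V]
    {T : Module.End F V} (hT : Continuous T) (h : ¬ QuasiPeriodic T) : orbitNumber T = ⊤ := by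
  have : Countable F := Finite.to_countable
  rcases isAlgebraic_or_exists_forall_aeval_eq_zero hT with halg | ⟨x, hx⟩
  · exact (h halg.quasiPeriodic).elim
  · exact orbitNumber_eq_top_of_forall_hasDisjointOrbits
      (hasDisjointOrbits_of_forall_aeval_eq_zero hx)

end LinearEndomorphism

def wshiftₗ {F : Type*} [Field F] {Γ : Type*} (φ : Γ → Γ) (w : Γ → F) :
    Module.End F (Γ → F) where
  toFun := wshift φ w
  map_add' x y := funext fun α => mul_add (w α) (x (φ α)) (y (φ α))
  map_smul' c x := funext fun α => mul_left_comm (w α) c (x (φ α))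

theorem orbitNumber_wshift_eq_top {F : Type*} [Field F] [Fintype F] {Γ : Type*} {φ : Γ → Γ}
    {w : Γ → F} (h : ¬ QuasiPeriodic (wshift φ w)) : orbitNumber (wshift φ w) = ⊤ := by
  let _ : TopologicalSpace F := ⊥
  have _ : DiscreteTopology F := ⟨rfl⟩
  exact orbitNumber_eq_top_of_not_quasiPeriodic (T := wshiftₗ φ w)
    (continuous_pi fun α => continuous_of_discreteTopology.comp (continuous_apply (φ α))) h

theorem stmt_19_general {F : Type*} [Field F] [Fintype F] {Γ : Type*}
    (φ : Γ → Γ) (w : Γ → F)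
    (hff : FiniteFibre (wshift φ w)) :
    entSet (wshift φ w) = entSet (wshift φ (1 : Γ → F)) := by
  unfold entSet
  by_cases hφ : QuasiPeriodic φ
  · rw [orbitNumber_eq_zero_of_quasiPeriodic (hφ.quasiPeriodic_wshift w),
      orbitNumber_eq_zero_of_quasiPeriodic (hφ.quasiPeriodic_wshift 1)]
  · rw [orbitNumber_wshift_eq_top fun h => hφ (h.of_wshift hff),
      orbitNumber_wshift_eq_top fun h => hφ h.of_wshift_one]

/-- If `σ_{φ,𝔴}` is finite fibre, then `ent_set(σ_{φ,𝔴}) = ent_set(σ_φ)`. -/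
theorem stmt_19 {F : Type*} [Field F] [Fintype F] {Γ : Type*} [Nonempty Γ]
    (φ : Γ → Γ) (w : Γ → F)
    (hff : FiniteFibre (wshift φ w)) :
    entSet (wshift φ w) = entSet (wshift φ (1 : Γ → F)) :=
  stmt_19_general φ w hff
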